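/- The monoid M = ⟨x, y, z | xy = yzx⟩ has elasticity ρ(M) = 2, but does not have accepted elasticity: ρ(L_M(a)) < 2 for every word a over {x,y,z}. -/

import Mathlib

/-- Two words over `X` represent the same element of the presented monoid `⟨X | R⟩`. -/
def eqM {X : Type*} (R : Set (FreeMonoid X × FreeMonoid X)) (a b : FreeMonoid X) : Prop :=
  conGen (fun x y => (x, y) ∈ R) a b

/-- The length set of a word `a` in `⟨X | R⟩`. -/
def LSet {X : Type*} (R : Set (FreeMonoid X × FreeMonoid X)) (a : FreeMonoid X) : Set ℕ :=
  {n | ∃ b : FreeMonoid X, eqM R a b ∧ b.length = n}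

abbrev MP := WithBot ℕ

structure MyMat where
  aa : MP
  ab : MP
  ba : MP
  bb : MP
deriving DecidableEq

namespace MyMat

def mul (p q : MyMat) : MyMat :=
  ⟨max (p.aa + q.aa) (p.ab + q.ba), max (p.aa + q.ab) (p.ab + q.bb),
   max (p.ba + q.aa) (p.bb + q.ba), max (p.ba + q.ab) (p.bb + q.bb)⟩

def one : MyMat := ⟨0, ⊥, ⊥, 0⟩

lemma mul_assoc (p q r : MyMat) : (p.mul q).mul r = p.mul (q.mul r) := by
  obtain ⟨a1,a2,a3,a4⟩ := p
  obtain ⟨b1,b2,b3,b4⟩ := q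
  obtain ⟨c1,c2,c3,c4⟩ := r
  simp only [mul, MyMat.mk.injEq, ← max_add_add_right, ← max_add_add_left, add_assoc]
  refine ⟨?_, ?_, ?_, ?_⟩ <;> exact max_max_max_comm _ _ _ _

lemma one_mul (p : MyMat) : one.mul p = p := by
  obtain ⟨a1,a2,a3,a4⟩ := p
  simp [mul, one]

end MyMat

def mlet : Fin 3 → MyMat
  | 0 => ⟨1, 1, ⊥, 2⟩
  | 1 => ⟨1, ⊥, 2, 2⟩
  | 2 => ⟨1, ⊥, ⊥, ⊥⟩

def phiL : List (Fin 3) → MyMat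
  | [] => MyMat.one
  | c :: w => (mlet c).mul (phiL w)

lemma phiL_append (u v : List (Fin 3)) : phiL (u ++ v) = (phiL u).mul (phiL v) := by
  induction u with
  | nil => simp [phiL, MyMat.one_mul]
  | cons c u ih => simp [phiL, ih, MyMat.mul_assoc]

/-- Upper bounds for the automaton entries. -/
lemma phiL_upper (w : List (Fin 3)) :
    (phiL w).aa ≤ ((2 * w.length : ℕ) : MP) ∧ (phiL w).ba ≤ ((2 * w.length : ℕ) : MP) ∧
      (w ≠ [] → (phiL w).aa + 1 ≤ ((2 * w.length : ℕ) : MP)) := by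
  induction w with
  | nil => refine ⟨by simp [phiL, MyMat.one], by simp [phiL, MyMat.one], by simp⟩
  | cons c w ih =>
    obtain ⟨h1, h2, -⟩ := ih
    set N : MP := ((2 * w.length : ℕ) : MP) with hN
    have hlen : (2 * (c :: w).length : ℕ) = 2 * w.length + 2 := by
      simp [List.length_cons]; ring
    have hcast : ((2 * (c :: w).length : ℕ) : MP) = N + 2 := by
      rw [hlen, hN]; push_cast; ring
    have k1 : ∀ x : MP, x ≤ N → 1 + x ≤ N + 2 := by
      intro x hx
      calc 1 + x = x + 1 := add_comm _ _
        _ ≤ N + 2 := by gcongr; exact one_le_two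
    have k2 : ∀ x : MP, x ≤ N → 2 + x ≤ N + 2 := by
      intro x hx
      calc 2 + x = x + 2 := add_comm _ _
        _ ≤ N + 2 := by gcongr
    have k3 : ∀ x : MP, x ≤ N → 1 + x + 1 ≤ N + 2 := by
      intro x hx
      calc 1 + x + 1 = x + 2 := by rw [add_comm 1 x, add_assoc]; norm_num
        _ ≤ N + 2 := by gcongr
    have kbot : ∀ y : MP, (⊥ : MP) + y ≤ N + 2 := by intro y; simp
    have kbot1 : ∀ y : MP, (⊥ : MP) + y + 1 ≤ N + 2 := by intro y; simp
    rw [hcast] at *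
    fin_cases c <;>
      simp only [phiL, mlet, MyMat.mul] <;>
      refine ⟨?_, ?_, fun _ => ?_⟩
    · exact max_le (k1 _ h1) (k1 _ h2)
    · exact max_le (kbot _) (k2 _ h2)
    · rw [← max_add_add_right]; exact max_le (k3 _ h1) (k3 _ h2)
    · exact max_le (k1 _ h1) (kbot _)
    · exact max_le (k2 _ h1) (k2 _ h2)
    · rw [← max_add_add_right]; exact max_le (k3 _ h1) (kbot1 _)
    · exact max_le (k1 _ h1) (kbot _)
    · exact max_le (kbot _) (kbot _)
    · rw [← max_add_add_right]; exact max_le (k3 _ h1) (kbot1 _)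
lemma phiL_lower (w : List (Fin 3)) : ((w.length : ℕ) : MP) ≤ (phiL w).aa := by
  induction w with
  | nil => simp [phiL, MyMat.one]
  | cons c w ih =>
    have h : ((w.length + 1 : ℕ) : MP) ≤ 1 + (phiL w).aa := by
      rw [add_comm 1 (phiL w).aa]
      calc ((w.length + 1 : ℕ) : MP) = ((w.length : ℕ) : MP) + 1 := by push_cast; ring
        _ ≤ (phiL w).aa + 1 := by gcongr
    fin_cases c <;> simp only [phiL, mlet, MyMat.mul, List.length_cons] <;>
      exact le_trans h (le_max_left _ _)

def phiF (w : FreeMonoid (Fin 3)) : MyMat := phiL w.toList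

lemma phiF_mul (a b : FreeMonoid (Fin 3)) : phiF (a * b) = (phiF a).mul (phiF b) := by
  unfold phiF
  rw [FreeMonoid.toList_mul, phiL_append]

def myCon : Con (FreeMonoid (Fin 3)) where
  r a b := phiF a = phiF b
  iseqv := ⟨fun _ => rfl, Eq.symm, Eq.trans⟩
  mul' := by
    intro a b c d h1 h2
    show phiF (a * c) = phiF (b * d)
    rw [phiF_mul, phiF_mul, show phiF a = phiF b from h1, show phiF c = phiF d from h2]

abbrev R0 : Set (FreeMonoid (Fin 3) × FreeMonoid (Fin 3)) :=
  {(FreeMonoid.of 0 * FreeMonoid.of 1,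
    FreeMonoid.of 1 * FreeMonoid.of 2 * FreeMonoid.of 0)}

lemma gen_eq : phiF (FreeMonoid.of 0 * FreeMonoid.of 1 : FreeMonoid (Fin 3))
    = phiF (FreeMonoid.of 1 * FreeMonoid.of 2 * FreeMonoid.of 0) := by decide

lemma key {a b : FreeMonoid (Fin 3)} (h : eqM R0 a b) : phiF a = phiF b := by
  refine (Con.conGen_le (c := myCon)).2 ?_ h
  intro x y hxy
  have h1 : x = FreeMonoid.of 0 * FreeMonoid.of 1 := congrArg Prod.fst hxy
  have h2 : y = FreeMonoid.of 1 * FreeMonoid.of 2 * FreeMonoid.of 0 := congrArg Prod.snd hxy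
  show phiF x = phiF y
  rw [h1, h2]; exact gen_eq

-- the two families of words
def ak (k : ℕ) : FreeMonoid (Fin 3) := FreeMonoid.of 0 * (FreeMonoid.of 1) ^ k
def bk (k : ℕ) : FreeMonoid (Fin 3) := (FreeMonoid.of 1 * FreeMonoid.of 2) ^ k * FreeMonoid.of 0

lemma len_ak (k : ℕ) : (ak k).length = k + 1 := by
  induction k with
  | zero => simp [ak]
  | succ k ih =>
    have : ak (k+1) = ak k * FreeMonoid.of 1 := by
      unfold ak; rw [pow_succ, mul_assoc]
    rw [this, FreeMonoid.length_mul, ih, FreeMonoid.length_of]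

lemma len_bk (k : ℕ) : (bk k).length = 2 * k + 1 := by
  induction k with
  | zero => simp [bk]
  | succ k ih =>
    have : bk (k+1) = (FreeMonoid.of 1 * FreeMonoid.of 2) * bk k := by
      unfold bk; rw [pow_succ', mul_assoc]
    rw [this, FreeMonoid.length_mul, ih, FreeMonoid.length_mul, FreeMonoid.length_of,
      FreeMonoid.length_of]
    ring

lemma eq_ak_bk (k : ℕ) : eqM R0 (ak k) (bk k) := by
  induction k with
  | zero =>
    have : ak 0 = bk 0 := by unfold ak bk; simp
    rw [this]; exact ConGen.Rel.refl _
  | succ k ih =>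
    have e1 : ak (k+1) = (FreeMonoid.of 0 * FreeMonoid.of 1) * (FreeMonoid.of 1) ^ k := by
      unfold ak; rw [pow_succ', ← mul_assoc]
    have e2 : bk (k+1) = (FreeMonoid.of 1 * FreeMonoid.of 2) * bk k := by
      unfold bk; rw [pow_succ', mul_assoc]
    rw [e1, e2]
    have s1 : eqM R0 ((FreeMonoid.of 0 * FreeMonoid.of 1) * (FreeMonoid.of 1) ^ k)
        ((FreeMonoid.of 1 * FreeMonoid.of 2 * FreeMonoid.of 0) * (FreeMonoid.of 1) ^ k) :=
      ConGen.Rel.mul (ConGen.Rel.of _ _ rfl) (ConGen.Rel.refl _)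
    have e3 : (FreeMonoid.of 1 * FreeMonoid.of 2 * FreeMonoid.of 0) * (FreeMonoid.of 1 : FreeMonoid (Fin 3)) ^ k
        = (FreeMonoid.of 1 * FreeMonoid.of 2) * ak k := by
      unfold ak; rw [mul_assoc]
    have s2 : eqM R0 ((FreeMonoid.of 1 * FreeMonoid.of 2) * ak k)
        ((FreeMonoid.of 1 * FreeMonoid.of 2) * bk k) :=
      ConGen.Rel.mul (ConGen.Rel.refl _) ih
    exact ConGen.Rel.trans s1 (e3 ▸ s2)


/-- The monoid `M = ⟨x, y, z | xy = yzx⟩` has elasticity `ρ(M) = 2`, but the elasticity is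
not accepted: `ρ(L_M(a)) < 2` for every word `a`, while ratios of lengths approach `2`. -/
theorem stmt_16 :
    letI R : Set (FreeMonoid (Fin 3) × FreeMonoid (Fin 3)) :=
      {(FreeMonoid.of 0 * FreeMonoid.of 1,
        FreeMonoid.of 1 * FreeMonoid.of 2 * FreeMonoid.of 0)}
    (∀ a : FreeMonoid (Fin 3), ∀ m ∈ LSet R a, ∀ n ∈ LSet R a,
        0 < n → (m : ℚ) < 2 * (n : ℚ)) ∧
      (∀ q : ℚ, q < 2 → ∃ a : FreeMonoid (Fin 3), ∃ m ∈ LSet R a, ∃ n ∈ LSet R a,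
        0 < n ∧ q * (n : ℚ) < (m : ℚ)) := by
  refine ⟨?_, ?_⟩
  · -- elasticity is at most (2n-1)/n < 2
    intro a m hm n hn hnpos
    obtain ⟨b, hab, hb⟩ := hm
    obtain ⟨c, hac, hc⟩ := hn
    have hbc : eqM R0 b c := ConGen.Rel.trans (ConGen.Rel.symm hab) hac
    have e : phiF b = phiF c := key hbc
    have hbl : b.toList.length = m := hb
    have hcl : c.toList.length = n := hc
    have lb : ((m : ℕ) : MP) ≤ (phiL b.toList).aa := by
      have h := phiL_lower b.toList
      rwa [hbl] at h
    have hcne : c.toList ≠ [] := by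
      intro h0
      rw [h0] at hcl
      simp at hcl
      omega
    have ub : (phiL c.toList).aa + 1 ≤ ((2 * n : ℕ) : MP) := by
      obtain ⟨-, -, h3⟩ := phiL_upper c.toList
      have h := h3 hcne
      rwa [hcl] at h
    have hmn : ((m : ℕ) : MP) + 1 ≤ ((2 * n : ℕ) : MP) := by
      calc ((m : ℕ) : MP) + 1 ≤ (phiL b.toList).aa + 1 := by gcongr
        _ = (phiL c.toList).aa + 1 := by
            rw [show phiL b.toList = phiL c.toList from e]
        _ ≤ _ := ub
    have hmn2 : ((m + 1 : ℕ) : MP) ≤ ((2 * n : ℕ) : MP) := by push_cast; exact hmn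
    have hmn3 : m + 1 ≤ 2 * n := by exact_mod_cast hmn2
    have : m < 2 * n := by omega
    exact_mod_cast this
  · -- ratios approach 2 via x y^k ~ (yz)^k x
    intro q hq
    obtain ⟨K, hK⟩ := exists_nat_gt (1 / (2 - q))
    refine ⟨ak K, (bk K).length, ⟨bk K, eq_ak_bk K, rfl⟩,
      (ak K).length, ⟨ak K, ConGen.Rel.refl _, rfl⟩, ?_, ?_⟩
    · rw [len_ak]; omega
    · rw [len_ak, len_bk]
      have h2q : (0:ℚ) < 2 - q := by linarith
      have hK1 : 1 / (2 - q) < (K : ℚ) + 1 := lt_of_lt_of_le hK (by linarith)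
      rw [div_lt_iff₀ h2q] at hK1
      have expand : ((K:ℚ) + 1) * (2 - q) = 2 * ((K:ℚ) + 1) - q * ((K:ℚ) + 1) := by ring
      push_cast
      linarith
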